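/- Let a < b be real numbers, p, q ∈ ℕ, R0 ∈ L∞([a,b]; ℝ^{p×q}), and let R1, R2 : [a,b]² → ℝ^{p×q} be separable functions. Then there exists a continuous (bounded) linear operator P : L2([a,b];ℝ^q) → L2([a,b];ℝ^p) such that for every v ∈ L2([a,b];ℝ^q), (P v)(s) = R0(s) v(s) + ∫_a^s R1(s,θ) v(θ) dθ + ∫_s^b R2(s,θ) v(θ) dθ for almost every s ∈ [a,b]. (That is, every 3-PI operator with essentially bounded multiplier and separable kernels defines a bounded linear map from L2^q to L2^p.) -/

import Mathlib

open MeasureTheory Matrix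

noncomputable section

/-- The Lebesgue measure restricted to the interval `[a,b]`. -/
def μab (a b : ℝ) : Measure ℝ := volume.restrict (Set.Icc a b)

/-- A matrix-valued function on `[a,b]` is essentially bounded (i.e. belongs to
`L∞([a,b]; ℝ^{ι×κ})`): it is measurable and entrywise a.e. bounded. -/
def EssBddMat {ι κ : Type*} (a b : ℝ) (M : ℝ → Matrix ι κ ℝ) : Prop :=
  Measurable (fun s i j => M s i j) ∧ ∃ C : ℝ, ∀ᵐ s ∂(μab a b), ∀ i j, |M s i j| ≤ C

/-- A matrix-valued kernel `R : [a,b]² → ℝ^{ι×κ}` is separable if `R(s,θ) = F(s)ᵀ G(θ)`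
for some `r ∈ ℕ` and essentially bounded `F : [a,b] → ℝ^{r×ι}`, `G : [a,b] → ℝ^{r×κ}`. -/
def SepMat {ι κ : Type*} (a b : ℝ) (R : ℝ → ℝ → Matrix ι κ ℝ) : Prop :=
  ∃ (r : ℕ) (F : ℝ → Matrix (Fin r) ι ℝ) (G : ℝ → Matrix (Fin r) κ ℝ),
    EssBddMat a b F ∧ EssBddMat a b G ∧
    ∀ s ∈ Set.Icc a b, ∀ θ ∈ Set.Icc a b, R s θ = (F s)ᵀ * G θ

/-!
A separable kernel `F(s)ᵀ G(θ)` factors each integral term of the 3-PI operator as multiplication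
by `G`, integration from a fixed base point (a Volterra operator), and multiplication by `Fᵀ`.
Multiplication by an essentially bounded matrix function is bounded on `L²` by Hölder's
inequality. The Volterra operator is bounded because `L² ⊆ L¹` on `[a,b]`, and the primitive of
an `L¹` function is continuous and bounded by its `L¹` norm, hence lies in `L²` again.
-/

open scoped ENNReal BoundedContinuousFunction

lemma one_div_toReal_sub_one_div_toReal_nonneg {p q : ℝ≥0∞} [Fact (1 ≤ q)] (hqp : q ≤ p) :
    0 ≤ 1 / q.toReal - 1 / p.toReal := by
  rcases eq_or_ne p ∞ with rfl | hp
  · simp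
  have hq : 0 < q.toReal := ENNReal.toReal_pos (one_pos.trans_le Fact.out).ne'
    (ne_top_of_le_ne_top hp hqp)
  exact sub_nonneg.2 (one_div_le_one_div_of_le hq (ENNReal.toReal_mono hp hqp))

namespace MeasureTheory.Lp

section

variable {α E : Type*} [MeasurableSpace α] {μ : Measure α} [NormedAddCommGroup E]
  [NormedSpace ℝ E]

def inclusion [IsFiniteMeasure μ] {p q : ℝ≥0∞} [Fact (1 ≤ p)] [Fact (1 ≤ q)] (hqp : q ≤ p) :
    Lp E p μ →L[ℝ] Lp E q μ :=
  LinearMap.mkContinuous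
    { toFun := fun f => ⟨f, Lp.mem_Lp_iff_memLp.2 ((Lp.memLp f).mono_exponent hqp)⟩
      map_add' := fun _ _ => rfl
      map_smul' := fun _ _ => rfl }
    (μ Set.univ ^ (1 / q.toReal - 1 / p.toReal)).toReal
    (fun f => by
      simp only [LinearMap.coe_mk, AddHom.coe_mk, Lp.norm_def]
      rw [mul_comm, ← ENNReal.toReal_mul]
      refine ENNReal.toReal_mono (ENNReal.mul_ne_top (Lp.eLpNorm_ne_top f)
        (ENNReal.rpow_ne_top_of_nonneg (one_div_toReal_sub_one_div_toReal_nonneg hqp)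
          (measure_ne_top _ _))) ?_
      exact eLpNorm_le_eLpNorm_mul_rpow_measure_univ hqp (Lp.aestronglyMeasurable f))

end

section Primitive

variable {E : Type*} [NormedAddCommGroup E] [NormedSpace ℝ E] {μ : Measure ℝ}

lemma norm_intervalIntegral_le (f : Lp E 1 μ) (c s : ℝ) :
    ‖∫ θ in c..s, f θ ∂μ‖ ≤ ‖f‖ :=
  calc ‖∫ θ in c..s, f θ ∂μ‖ ≤ ∫ θ in Set.uIoc c s, ‖f θ‖ ∂μ :=
        intervalIntegral.norm_integral_le_integral_norm_uIoc
    _ ≤ ∫ θ, ‖f θ‖ ∂μ :=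
        setIntegral_le_integral (L1.integrable_coeFn f).norm (.of_forall fun _ => norm_nonneg _)
    _ = ‖f‖ := (L1.norm_eq_integral_norm f).symm

variable [NullSingletonClass μ]

def primitive (c : ℝ) : Lp E 1 μ →L[ℝ] (ℝ →ᵇ E) :=
  LinearMap.mkContinuous
    { toFun := fun f => .ofNormedAddCommGroup (fun s => ∫ θ in c..s, f θ ∂μ)
        ((L1.integrable_coeFn f).continuous_primitive c) ‖f‖ (norm_intervalIntegral_le f c)
      map_add' := fun f g => by
        ext s
        simp only [BoundedContinuousFunction.coe_add, Pi.add_apply,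
          BoundedContinuousFunction.coe_ofNormedAddCommGroup]
        rw [intervalIntegral.integral_congr_ae ((Lp.coeFn_add f g).mono fun _ h _ => h)]
        exact intervalIntegral.integral_add (L1.integrable_coeFn f).intervalIntegrable
          (L1.integrable_coeFn g).intervalIntegrable
      map_smul' := fun r f => by
        ext s
        simp only [BoundedContinuousFunction.coe_smul, RingHom.id_apply,
          BoundedContinuousFunction.coe_ofNormedAddCommGroup]
        rw [intervalIntegral.integral_congr_ae ((Lp.coeFn_smul r f).mono fun _ h _ => h)]
        exact intervalIntegral.integral_smul r _ }
    1 (fun f => by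
      simpa using BoundedContinuousFunction.norm_ofNormedAddCommGroup_le _ (norm_nonneg f) _)

variable [IsFiniteMeasure μ] (p : ℝ≥0∞) [Fact (1 ≤ p)]

def volterra (c : ℝ) : Lp E p μ →L[ℝ] Lp E p μ :=
  BoundedContinuousFunction.toLp p μ ℝ ∘L primitive c ∘L inclusion (Fact.out : 1 ≤ p)

lemma coeFn_volterra (c : ℝ) (f : Lp E p μ) :
    volterra p c f =ᵐ[μ] fun s => ∫ θ in c..s, f θ ∂μ :=
  BoundedContinuousFunction.coeFn_toLp p μ ℝ _

end Primitive

end MeasureTheory.Lp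

namespace MeasureTheory.MemLp

variable {α E F : Type*} [MeasurableSpace α] {μ : Measure α} [NormedAddCommGroup E]
  [NormedSpace ℝ E] [NormedAddCommGroup F] [NormedSpace ℝ F] {A : α → E →L[ℝ] F}
  (hA : MemLp A ∞ μ) (p : ℝ≥0∞) [Fact (1 ≤ p)]

def mulOperator : Lp E p μ →L[ℝ] Lp F p μ :=
  (ContinuousLinearMap.id ℝ (E →L[ℝ] F)).holderL μ ∞ p p (hA.toLp A)

lemma coeFn_mulOperator (f : Lp E p μ) : hA.mulOperator p f =ᵐ[μ] fun x => A x (f x) := by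
  filter_upwards [(ContinuousLinearMap.id ℝ (E →L[ℝ] F)).coeFn_holder (r := p) (hA.toLp A) f,
    hA.coeFn_toLp] with x hx hAx
  rw [mulOperator, ContinuousLinearMap.holderL_apply_apply, hx, hAx]
  rfl

end MeasureTheory.MemLp

section MatrixOperators

/-- Entries are taken from `m → n → ℝ` with its sup norm, since `Matrix` carries no norm. -/
def matrixToEuclideanCLM {m n : Type*} [Fintype m] [Fintype n] [DecidableEq n] :
    (m → n → ℝ) →L[ℝ] EuclideanSpace ℝ n →L[ℝ] EuclideanSpace ℝ m :=
  LinearMap.toContinuousLinearMap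
    (LinearMap.toContinuousLinearMap.toLinearMap ∘ₗ (Matrix.toLpLin 2 2).toLinearMap)

lemma matrixToEuclideanCLM_comp_apply {l m n : Type*} [Fintype l] [Fintype m] [Fintype n]
    [DecidableEq m] [DecidableEq n] (M : Matrix l m ℝ) (N : Matrix m n ℝ)
    (x : EuclideanSpace ℝ n) (i : l) :
    matrixToEuclideanCLM M (matrixToEuclideanCLM N x) i = ((M * N) *ᵥ WithLp.ofLp x) i := by
  rw [← Matrix.mulVec_mulVec]
  rfl

variable {a b : ℝ}

lemma EssBddMat.transpose {m n : Type*} {M : ℝ → Matrix m n ℝ} (h : EssBddMat a b M) :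
    EssBddMat a b fun s => (M s)ᵀ :=
  ⟨measurable_pi_lambda _ fun j => measurable_pi_lambda _ fun i =>
      measurable_pi_apply j |>.comp <| measurable_pi_apply i |>.comp h.1,
    h.2.imp fun _ hC => hC.mono fun _ hs j i => hs i j⟩

lemma EssBddMat.memLp_top {m n : Type*} [Fintype m] [Fintype n] [DecidableEq n]
    {M : ℝ → Matrix m n ℝ} (h : EssBddMat a b M) :
    MemLp (fun s => matrixToEuclideanCLM fun i j => M s i j) ∞ (μab a b) := by
  obtain ⟨hM, C, hC⟩ := h
  refine memLp_top_of_bound (matrixToEuclideanCLM.continuous.comp_aestronglyMeasurable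
    hM.aestronglyMeasurable) (‖(matrixToEuclideanCLM : (m → n → ℝ) →L[ℝ] _)‖ * max C 0) ?_
  filter_upwards [hC] with s hs
  refine (ContinuousLinearMap.le_opNorm _ _).trans (mul_le_mul_of_nonneg_left ?_ (norm_nonneg _))
  exact (pi_norm_le_iff_of_nonneg (le_max_right _ _)).2 fun i =>
    (pi_norm_le_iff_of_nonneg (le_max_right _ _)).2 fun j => (hs i j).trans (le_max_left _ _)

end MatrixOperators

instance (a b : ℝ) : IsFiniteMeasure (μab a b) :=
  inferInstanceAs (IsFiniteMeasure (volume.restrict _))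

instance (a b : ℝ) : NullSingletonClass (μab a b) :=
  inferInstanceAs (NullSingletonClass (volume.restrict _))

lemma intervalIntegral_eq_intervalIntegral_μab {E : Type*} [NormedAddCommGroup E]
    [NormedSpace ℝ E] {a b c d : ℝ} {f g : ℝ → E} (hac : a ≤ c) (hcd : c ≤ d) (hdb : d ≤ b)
    (hfg : Set.EqOn f g (Set.Icc a b)) :
    ∫ θ in c..d, f θ = ∫ θ in c..d, g θ ∂μab a b := by
  have hsub : Set.Ioc c d ⊆ Set.Icc a b :=
    Set.Ioc_subset_Icc_self.trans (Set.Icc_subset_Icc hac hdb)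
  rw [intervalIntegral.integral_of_le hcd, intervalIntegral.integral_of_le hcd, μab,
    Measure.restrict_restrict measurableSet_Ioc, Set.inter_eq_left.2 hsub]
  exact setIntegral_congr_fun measurableSet_Ioc (hfg.mono hsub)

section SeparableOperator

variable {a b : ℝ} {k m n : Type*} [Fintype k] [Fintype m] [Fintype n] [DecidableEq k]
  [DecidableEq n] {F : ℝ → Matrix k m ℝ} {G : ℝ → Matrix k n ℝ}

def separableOperator (hF : EssBddMat a b F) (hG : EssBddMat a b G) (c : ℝ) :
    Lp (EuclideanSpace ℝ n) 2 (μab a b) →L[ℝ] Lp (EuclideanSpace ℝ m) 2 (μab a b) :=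
  hF.transpose.memLp_top.mulOperator 2 ∘L Lp.volterra 2 c ∘L hG.memLp_top.mulOperator 2

lemma coeFn_separableOperator (hF : EssBddMat a b F) (hG : EssBddMat a b G) (c : ℝ)
    (v : Lp (EuclideanSpace ℝ n) 2 (μab a b)) :
    ∀ᵐ s ∂(μab a b), ∀ i, separableOperator hF hG c v s i =
      ∫ θ in c..s, (((F s)ᵀ * G θ) *ᵥ WithLp.ofLp (v θ)) i ∂(μab a b) := by
  set w := hG.memLp_top.mulOperator 2 v
  have hw := hG.memLp_top.coeFn_mulOperator 2 v
  filter_upwards [hF.transpose.memLp_top.coeFn_mulOperator 2 (Lp.volterra 2 c w),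
    Lp.coeFn_volterra 2 c w] with s hFs hVs i
  let L := EuclideanSpace.proj i ∘L matrixToEuclideanCLM fun i j => (F s)ᵀ i j
  calc separableOperator hF hG c v s i = L (∫ θ in c..s, w θ ∂(μab a b)) := by
        rw [separableOperator, ContinuousLinearMap.comp_apply, ContinuousLinearMap.comp_apply,
          hFs, hVs]
        rfl
    _ = ∫ θ in c..s, L (w θ) ∂(μab a b) :=
        (L.intervalIntegral_comp_comm ((Lp.memLp w).integrable one_le_two).intervalIntegrable).symm
    _ = _ := by
        refine intervalIntegral.integral_congr_ae (hw.mono fun θ hθ _ => ?_)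
        rw [hθ]
        exact matrixToEuclideanCLM_comp_apply _ _ _ _

end SeparableOperator

theorem three_PI_operator_bounded (a b : ℝ) (p q : ℕ)
    (R0 : ℝ → Matrix (Fin p) (Fin q) ℝ) (R1 R2 : ℝ → ℝ → Matrix (Fin p) (Fin q) ℝ)
    (hR0 : EssBddMat a b R0) (hR1 : SepMat a b R1) (hR2 : SepMat a b R2) :
    ∃ P : Lp (EuclideanSpace ℝ (Fin q)) 2 (μab a b) →L[ℝ]
          Lp (EuclideanSpace ℝ (Fin p)) 2 (μab a b),
      ∀ v : Lp (EuclideanSpace ℝ (Fin q)) 2 (μab a b),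
        ∀ᵐ s ∂(μab a b), ∀ i : Fin p,
          (P v : ℝ → EuclideanSpace ℝ (Fin p)) s i =
            (R0 s).mulVec (fun j => (v : ℝ → EuclideanSpace ℝ (Fin q)) s j) i
            + (∫ θ in a..s, (R1 s θ).mulVec
                (fun j => (v : ℝ → EuclideanSpace ℝ (Fin q)) θ j) i)
            + (∫ θ in s..b, (R2 s θ).mulVec
                (fun j => (v : ℝ → EuclideanSpace ℝ (Fin q)) θ j) i) := by
  obtain ⟨r1, F1, G1, hF1, hG1, hR1⟩ := hR1
  obtain ⟨r2, F2, G2, hF2, hG2, hR2⟩ := hR2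
  -- `∫ θ in s..b` is `-∫ θ in b..s`, hence the sign of the last term.
  refine ⟨hR0.memLp_top.mulOperator 2 + separableOperator hF1 hG1 a
    - separableOperator hF2 hG2 b, fun v => ?_⟩
  filter_upwards [Lp.coeFn_sub (hR0.memLp_top.mulOperator 2 v + separableOperator hF1 hG1 a v)
      (separableOperator hF2 hG2 b v),
    Lp.coeFn_add (hR0.memLp_top.mulOperator 2 v) (separableOperator hF1 hG1 a v),
    hR0.memLp_top.coeFn_mulOperator 2 v, coeFn_separableOperator hF1 hG1 a v,
    coeFn_separableOperator hF2 hG2 b v, ae_restrict_mem measurableSet_Icc]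
    with s hsub hadd h0 h1 h2 hs i
  have hRF1 := intervalIntegral_eq_intervalIntegral_μab le_rfl hs.1 hs.2
    (f := fun θ => (R1 s θ *ᵥ WithLp.ofLp (v θ)) i)
    (g := fun θ => (((F1 s)ᵀ * G1 θ) *ᵥ WithLp.ofLp (v θ)) i) fun θ hθ => by
      simp only [hR1 s hs θ hθ]
  have hRF2 := intervalIntegral_eq_intervalIntegral_μab hs.1 hs.2 le_rfl
    (f := fun θ => (R2 s θ *ᵥ WithLp.ofLp (v θ)) i)
    (g := fun θ => (((F2 s)ᵀ * G2 θ) *ᵥ WithLp.ofLp (v θ)) i) fun θ hθ => by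
      simp only [hR2 s hs θ hθ]
  rw [_root_.sub_apply, _root_.add_apply, hsub, Pi.sub_apply, hadd, Pi.add_apply, PiLp.sub_apply,
    PiLp.add_apply, h0, h1, h2, ← neg_neg (∫ θ in b..s, _ ∂μab a b),
    ← intervalIntegral.integral_symm, sub_neg_eq_add, ← hRF1, ← hRF2]
  rfl
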